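/- (Monad laws for step functions) With return := const, map, and join as defined, step functions form a monad up to the lifted equality ≍: for every type X, (i) join (const f) ≍ f for all f : S X; (ii) join (map const f) ≍ f for all f : S X; and (iii) join (join ff) ≍ join (map join ff) for all ff : S (S (S X)). -/

import Mathlib

set_option linter.unusedVariables false

/-- Rationals strictly between 0 and 1. -/
abbrev OO : Type := {q : ℚ // 0 < q ∧ q < 1}

/-- Rational step functions on the unit interval with values in `X`. -/
inductive S (X : Type) : Type
  | const : X → S X
  | glue : OO → S X → S X → S X

namespace S

def divO (a o : OO) (h : a.1 < o.1) : OO :=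
  ⟨a.1 / o.1, div_pos a.2.1 o.2.1, (div_lt_one o.2.1).2 h⟩

def subO (a o : OO) (h : o.1 < a.1) : OO :=
  ⟨(a.1 - o.1) / (1 - o.1),
    div_pos (by linarith) (by linarith [o.2.2]),
    (div_lt_one (by linarith [o.2.2])).2 (by linarith [a.2.2])⟩

/-- Left split: the part of the step function on `[0,a]`, rescaled to `[0,1]`. -/
def splitL {X : Type} : S X → OO → S X
  | const x, _ => const x
  | glue o f g, a =>
      if h : a.1 < o.1 then splitL f (divO a o h)
      else if h' : o.1 < a.1 then glue (divO o a h') f (splitL g (subO a o h'))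
      else f

/-- Right split: the part of the step function on `[a,1]`, rescaled to `[0,1]`. -/
def splitR {X : Type} : S X → OO → S X
  | const x, _ => const x
  | glue o f g, a =>
      if h : a.1 < o.1 then glue (subO o a h) (splitR f (divO a o h)) g
      else if h' : o.1 < a.1 then splitR g (subO a o h')
      else g

/-- The catamorphism (fold) for step functions. -/
def fold {X Y : Type} (φ : X → Y) (ψ : OO → Y → Y → Y) : S X → Y
  | const x => φ x
  | glue o f g => ψ o (fold φ ψ f) (fold φ ψ g)

/-- `map` for step functions. -/
def mapS {X Y : Type} (f : X → Y) : S X → S Y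
  | const x => const (f x)
  | glue o l r => glue o (mapS f l) (mapS f r)

/-- The applicative `ap` (pointwise application) for step functions. -/
def ap {X Y : Type} : S (X → Y) → S X → S Y
  | const f, x => mapS f x
  | glue o fl fr, x => glue o (ap fl (splitL x o)) (ap fr (splitR x o))

/-- Binary map. -/
def map2 {X Y Z : Type} (f : X → Y → Z) (a : S X) (b : S Y) : S Z :=
  ap (mapS f a) b

/-- `fold⋆`: a step function of propositions holds everywhere. -/
def foldStar : S Prop → Prop := fold id (fun _ p q => p ∧ q)

/-- Lifting of a relation to step functions: it holds pointwise everywhere. -/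
def liftRel {X Y : Type} (R : X → Y → Prop) (f : S X) (g : S Y) : Prop :=
  foldStar (map2 R f g)

/-- The equivalence `≍` on step functions: the lifting of equality. -/
def equivS {X : Type} (f g : S X) : Prop := liftRel Eq f g

def foldSup : S ℚ → ℚ := fold id (fun _ x y => max x y)

def foldAffine : S ℚ → ℚ := fold id (fun o x y => o.1 * x + (1 - o.1) * y)

def normInf (f : S ℚ) : ℚ := foldSup (mapS (fun q => |q|) f)

def normOne (f : S ℚ) : ℚ := foldAffine (mapS (fun q => |q|) f)

def dInf (f g : S ℚ) : ℚ := normInf (map2 (· - ·) f g)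

def dOne (f g : S ℚ) : ℚ := normOne (map2 (· - ·) f g)

end S

open S

namespace S

def depth {X : Type} : S X → ℕ
  | const _ => 0
  | glue _ f g => max (depth f) (depth g) + 1

theorem depth_mapS {X Y : Type} (f : X → Y) (s : S X) :
    depth (mapS f s) = depth s := by
  induction s with
  | const x => rfl
  | glue o l r ihl ihr => simp [mapS, depth, ihl, ihr]

/-- The monadic `join` of the step-function monad. -/
def joinS {X : Type} : S (S X) → S X
  | const f => f
  | glue o f g =>
      glue o (joinS (mapS (fun x => splitL x o) f))
             (joinS (mapS (fun x => splitR x o) g))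
  termination_by s => depth s
  decreasing_by
    all_goals simp only [depth_mapS, depth]; omega

end S

/-!
A step function denotes a function on `[0,1)` via `eval`. Under this denotation `splitL s a` and
`splitR s a` are `s` restricted to `[0,a)` and `[a,1)` and rescaled, `ap` is pointwise application
and `joinS` is diagonal evaluation `q ↦ (ff q) q`, while `≍` holds as soon as the denotations
agree on `[0,1)`. The monad laws thus reduce to those of the reader monad `ℚ → -`.
-/

namespace S

def eval {X : Type} : S X → ℚ → X
  | const x, _ => x
  | glue o f g, q => if q < o.1 then eval f (q / o.1) else eval g ((q - o.1) / (1 - o.1))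

variable {X Y : Type}

theorem eval_glue_of_lt {o : OO} {f g : S X} {q : ℚ} (h : q < o.1) :
    eval (glue o f g) q = eval f (q / o.1) := by
  simp [eval, h]

theorem eval_glue_of_le {o : OO} {f g : S X} {q : ℚ} (h : o.1 ≤ q) :
    eval (glue o f g) q = eval g ((q - o.1) / (1 - o.1)) := by
  simp [eval, not_lt.2 h]

theorem eval_glue_mul (o : OO) (f g : S X) {q : ℚ} (hq : q < 1) :
    eval (glue o f g) (q * o.1) = eval f q := by
  rw [eval_glue_of_lt (by nlinarith [o.2.1]), mul_div_cancel_right₀ _ o.2.1.ne']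

theorem eval_glue_add_mul (o : OO) (f g : S X) {q : ℚ} (hq : 0 ≤ q) :
    eval (glue o f g) (o.1 + q * (1 - o.1)) = eval g q := by
  have ho : 0 < 1 - o.1 := sub_pos.2 o.2.2
  rw [eval_glue_of_le (by nlinarith), add_sub_cancel_left, mul_div_cancel_right₀ _ ho.ne']

theorem eval_mapS (φ : X → Y) (s : S X) (q : ℚ) : eval (mapS φ s) q = φ (eval s q) := by
  induction s generalizing q with
  | const x => rfl
  | glue o l r ihl ihr => simp only [mapS, eval]; split <;> simp [ihl, ihr]

theorem eval_splitL (s : S X) (a : OO) {q : ℚ} (hq : q < 1) :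
    eval (splitL s a) q = eval s (q * a.1) := by
  induction s generalizing a q with
  | const x => rfl
  | glue o f g ihf ihg =>
    obtain ⟨a, ha0, ha1⟩ := a
    obtain ⟨o, ho0, ho1⟩ := o
    rcases lt_trichotomy a o with h | rfl | h
    · rw [splitL, dif_pos h, ihf _ hq, eval_glue_of_lt (by dsimp only; nlinarith)]
      simp only [divO, mul_div_assoc]
    · simp only [splitL, lt_irrefl, dite_false]
      exact (eval_glue_mul _ _ _ hq).symm
    · rw [splitL, dif_neg h.not_gt, dif_pos h]
      by_cases hc : q < o / a
      · have hqa : q * a < o := (lt_div_iff₀ ha0).1 hc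
        rw [eval_glue_of_lt hc, eval_glue_of_lt hqa]
        simp only [divO]
        field_simp
      · have hqa : o ≤ q * a := (div_le_iff₀ ha0).1 (not_lt.1 hc)
        have hoa : o / a < 1 := (div_lt_one ha0).2 h
        rw [eval_glue_of_le (not_lt.1 hc), eval_glue_of_le hqa, ihg]
        · simp only [divO, subO]
          field_simp
        · exact (div_lt_one (sub_pos.2 hoa)).2 (by simp only [divO]; linarith)

theorem eval_splitR (s : S X) (a : OO) {q : ℚ} (hq : 0 ≤ q) :
    eval (splitR s a) q = eval s (a.1 + q * (1 - a.1)) := by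
  induction s generalizing a q with
  | const x => rfl
  | glue o f g ihf ihg =>
    obtain ⟨a, ha0, ha1⟩ := a
    obtain ⟨o, ho0, ho1⟩ := o
    have ha : 0 < 1 - a := sub_pos.2 ha1
    have ho : 0 < 1 - o := sub_pos.2 ho1
    rcases lt_trichotomy a o with h | rfl | h
    · rw [splitR, dif_pos h]
      by_cases hc : q < (o - a) / (1 - a)
      · have hqa : a + q * (1 - a) < o := by rw [lt_div_iff₀ ha] at hc; linarith
        rw [eval_glue_of_lt hc, eval_glue_of_lt hqa, ihf]
        · simp only [divO, subO]
          field_simp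
        · exact div_nonneg hq (le_of_lt (div_pos (sub_pos.2 h) ha))
      · have hqa : o ≤ a + q * (1 - a) := by rw [not_lt, div_le_iff₀ ha] at hc; linarith
        rw [eval_glue_of_le (not_lt.1 hc), eval_glue_of_le hqa]
        simp only [subO]
        field_simp
        ring_nf
    · simp only [splitR, lt_irrefl, dite_false]
      exact (eval_glue_add_mul _ _ _ hq).symm
    · rw [splitR, dif_neg h.not_gt, dif_pos h, ihg _ hq,
        eval_glue_of_le (show o ≤ a + q * (1 - a) by nlinarith)]
      simp only [subO]
      field_simp
      ring_nf

theorem eval_ap (F : S (X → Y)) (s : S X) (q : ℚ) : eval (ap F s) q = eval F q (eval s q) := by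
  induction F generalizing s q with
  | const φ => exact eval_mapS φ s q
  | glue o Fl Fr ihl ihr =>
    have ho : 0 < 1 - o.1 := sub_pos.2 o.2.2
    by_cases hq : q < o.1
    · rw [ap, eval_glue_of_lt hq, eval_glue_of_lt hq, ihl,
        eval_splitL _ _ ((div_lt_one o.2.1).2 hq), div_mul_cancel₀ _ o.2.1.ne']
    · have hq : o.1 ≤ q := not_lt.1 hq
      rw [ap, eval_glue_of_le hq, eval_glue_of_le hq, ihr,
        eval_splitR _ _ (div_nonneg (sub_nonneg.2 hq) ho.le), div_mul_cancel₀ _ ho.ne',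
        add_sub_cancel]

theorem eval_joinS (ff : S (S X)) (q : ℚ) : eval (joinS ff) q = eval (eval ff q) q := by
  induction ff using joinS.induct generalizing q with
  | case1 f => rw [joinS]; rfl
  | case2 o f g ihf ihg =>
    have ho : 0 < 1 - o.1 := sub_pos.2 o.2.2
    by_cases hq : q < o.1
    · rw [joinS, eval_glue_of_lt hq, eval_glue_of_lt hq, ihf, eval_mapS,
        eval_splitL _ _ ((div_lt_one o.2.1).2 hq), div_mul_cancel₀ _ o.2.1.ne']
    · have hq : o.1 ≤ q := not_lt.1 hq
      rw [joinS, eval_glue_of_le hq, eval_glue_of_le hq, ihg, eval_mapS,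
        eval_splitR _ _ (div_nonneg (sub_nonneg.2 hq) ho.le), div_mul_cancel₀ _ ho.ne',
        add_sub_cancel]

theorem foldStar_of_eval (s : S Prop) (h : ∀ q ∈ Set.Ico (0 : ℚ) 1, eval s q) : foldStar s := by
  induction s with
  | const P => exact h 0 ⟨le_rfl, one_pos⟩
  | glue o p p' ihp ihp' =>
    have ho : 0 < 1 - o.1 := sub_pos.2 o.2.2
    refine ⟨ihp fun q hq => ?_, ihp' fun q hq => ?_⟩
    · rw [← eval_glue_mul o p p' hq.2]
      exact h _ ⟨mul_nonneg hq.1 o.2.1.le, by nlinarith [hq.2, o.2.1, o.2.2]⟩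
    · rw [← eval_glue_add_mul o p p' hq.1]
      exact h _ ⟨by nlinarith [mul_nonneg hq.1 ho.le, o.2.1], by nlinarith [hq.2]⟩

theorem equivS_of_eval {f g : S X} (h : ∀ q ∈ Set.Ico (0 : ℚ) 1, eval f q = eval g q) :
    equivS f g :=
  foldStar_of_eval _ fun q hq => by rw [map2, eval_ap, eval_mapS]; exact h q hq

end S

open S in
/-- The monad laws for step functions, up to the lifted equality. -/
theorem step_monad_laws {X : Type} :
    (∀ f : S X, equivS (joinS (S.const f)) f) ∧
    (∀ f : S X, equivS (joinS (mapS S.const f)) f) ∧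
    (∀ ff : S (S (S X)), equivS (joinS (joinS ff)) (joinS (mapS joinS ff))) :=
  ⟨fun f => equivS_of_eval fun q _ => by rw [eval_joinS]; rfl,
    fun f => equivS_of_eval fun q _ => by rw [eval_joinS, eval_mapS]; rfl,
    fun ff => equivS_of_eval fun q _ => by simp only [eval_joinS, eval_mapS]⟩
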